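/- arXiv:2409.15506 — 5 statements merged into one kernel-verified Lean document; each statement's English description precedes it below -/
import Mathlib

section
/- Let w be a weighted graph on n ≥ 2 vertices with Laplacian L. Then for every subset S of the vertices with 1 ≤ |S| ≤ n − 1, the algebraic connectivity satisfies λ₂(L) ≤ n · w(δ(S)) / (|S| · (n − |S|)), where w(δ(S)) = Σ_{i∈S, j∉S} w i j is the cut weight of S. -/
open Finset Matrix

/-- The Laplacian matrix of a weighted graph `w` on `n` vertices:
off-diagonal entries `-w i j`, diagonal entries `∑ j, w i j`. -/
def lap {n : ℕ} (w : Fin n → Fin n → ℝ) : Matrix (Fin n) (Fin n) ℝ :=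
  Matrix.of fun i j => if i = j then ∑ k, w i k else - w i j

/-- The cut weight `w(δ(S)) = ∑_{i ∈ S, j ∉ S} w i j`. -/
def cutWeight {n : ℕ} (w : Fin n → Fin n → ℝ) (S : Finset (Fin n)) : ℝ :=
  ∑ i ∈ S, ∑ j ∈ Sᶜ, w i j

/-- For every vertex subset `S` with `1 ≤ |S| ≤ n - 1`, the algebraic
connectivity satisfies `λ₂(L) ≤ n · w(δ(S)) / (|S| · (n − |S|))`. -/
theorem lam2_le_cut_bound {n : ℕ} (hn : 2 ≤ n) (w : Fin n → Fin n → ℝ)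
    (hsymm : ∀ i j, w i j = w j i) (hnonneg : ∀ i j, 0 ≤ w i j)
    (hdiag : ∀ i, w i i = 0)
    (lam2 : ℝ)
    (hlam2 : IsLeast {r : ℝ | ∃ x : Fin n → ℝ, x ≠ 0 ∧ (∑ i, x i) = 0 ∧
      r = (x ⬝ᵥ (lap w *ᵥ x)) / (x ⬝ᵥ x)} lam2)
    (S : Finset (Fin n)) (hS1 : 1 ≤ S.card) (hS2 : S.card ≤ n - 1) :
    lam2 ≤ (n : ℝ) * cutWeight w S / ((S.card : ℝ) * ((n : ℝ) - (S.card : ℝ))) := by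
  have hsltn : S.card < n := by omega
  have hs0 : (0:ℝ) < S.card := by exact_mod_cast hS1
  have hsn : (S.card : ℝ) < n := by exact_mod_cast hsltn
  set s : ℝ := (S.card : ℝ) with hsdef
  set a : ℝ := (n : ℝ) - s with hadef
  have ha0 : 0 < a := by simp [hadef]; linarith
  set x : Fin n → ℝ := fun i => if i ∈ S then a else -s with hxdef
  have hxS : ∀ i ∈ S, x i = a := fun i hi => by simp [hxdef, hi]
  have hxSc : ∀ i ∈ Sᶜ, x i = -s := fun i hi => by
    simp [hxdef, Finset.mem_compl.mp hi]
  have hcardSc : (Sᶜ.card : ℝ) = (n : ℝ) - s := by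
    rw [Finset.card_compl]
    simp [Fintype.card_fin]
    push_cast [Nat.cast_sub hsltn.le]
    ring
  have hx0 : x ≠ 0 := by
    obtain ⟨i, hi⟩ := Finset.card_pos.mp hS1
    intro h
    have := congrFun h i
    rw [hxS i hi] at this
    simp at this
    linarith
  have hsum : ∑ i, x i = 0 := by
    rw [← Finset.sum_add_sum_compl S]
    rw [Finset.sum_congr rfl hxS, Finset.sum_congr rfl hxSc]
    rw [Finset.sum_const, Finset.sum_const]
    simp [hcardSc]
    ring
  -- key formula for Laplacian quadratic form entries
  have key : ∀ i, (lap w *ᵥ x) i = ∑ j, w i j * (x i - x j) := by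
    intro i
    simp only [Matrix.mulVec, dotProduct, lap, Matrix.of_apply]
    have : ∀ j : Fin n, (if i = j then ∑ k, w i k else - w i j) * x j
        = (if i = j then (∑ k, w i k) * x i else 0) - w i j * x j := by
      intro j
      by_cases h : i = j
      · subst h; simp [hdiag]
      · simp [h]
    rw [Finset.sum_congr rfl (fun j _ => this j), Finset.sum_sub_distrib,
      Finset.sum_ite_eq]
    simp [Finset.mul_sum, mul_sub, Finset.sum_mul]
  have hA : x ⬝ᵥ (lap w *ᵥ x) = (n:ℝ)^2 * cutWeight w S := by
    simp only [dotProduct]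
    rw [Finset.sum_congr rfl (fun i _ => by rw [key i])]
    have expand : ∑ i, x i * ∑ j, w i j * (x i - x j)
        = ∑ i, ∑ j, x i * (w i j * (x i - x j)) := by
      exact Finset.sum_congr rfl (fun i _ => Finset.mul_sum _ _ _)
    rw [expand]
    rw [← Finset.sum_add_sum_compl S]
    have inner : ∀ i : Fin n, ∑ j, x i * (w i j * (x i - x j))
        = ∑ j ∈ S, x i * (w i j * (x i - x j))
          + ∑ j ∈ Sᶜ, x i * (w i j * (x i - x j)) :=
      fun i => (Finset.sum_add_sum_compl S _).symm
    rw [Finset.sum_congr rfl (fun i _ => inner i),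
        Finset.sum_congr (rfl : Sᶜ = Sᶜ) (fun i _ => inner i)]
    rw [Finset.sum_add_distrib, Finset.sum_add_distrib]
    have h11 : ∑ i ∈ S, ∑ j ∈ S, x i * (w i j * (x i - x j)) = 0 := by
      apply Finset.sum_eq_zero; intro i hi
      apply Finset.sum_eq_zero; intro j hj
      rw [hxS i hi, hxS j hj]; ring
    have h22 : ∑ i ∈ Sᶜ, ∑ j ∈ Sᶜ, x i * (w i j * (x i - x j)) = 0 := by
      apply Finset.sum_eq_zero; intro i hi
      apply Finset.sum_eq_zero; intro j hj
      rw [hxSc i hi, hxSc j hj]; ring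
    have h12 : ∑ i ∈ S, ∑ j ∈ Sᶜ, x i * (w i j * (x i - x j))
        = a * (n:ℝ) * cutWeight w S := by
      rw [cutWeight, Finset.mul_sum]
      apply Finset.sum_congr rfl; intro i hi
      rw [Finset.mul_sum]
      apply Finset.sum_congr rfl; intro j hj
      rw [hxS i hi, hxSc j hj, hadef]; ring
    have h21 : ∑ i ∈ Sᶜ, ∑ j ∈ S, x i * (w i j * (x i - x j))
        = s * (n:ℝ) * cutWeight w S := by
      have hswap : ∑ i ∈ Sᶜ, ∑ j ∈ S, w i j = cutWeight w S := by
        rw [Finset.sum_comm, cutWeight]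
        exact Finset.sum_congr rfl fun j _ =>
          Finset.sum_congr rfl fun i _ => hsymm i j
      rw [← hswap, Finset.mul_sum]
      apply Finset.sum_congr rfl; intro i hi
      rw [Finset.mul_sum]
      apply Finset.sum_congr rfl; intro j hj
      rw [hxSc i hi, hxS j hj, hadef]; ring
    rw [h11, h22, h12, h21, hadef]; ring
  have hB : x ⬝ᵥ x = (n:ℝ) * s * a := by
    simp only [dotProduct]
    rw [← Finset.sum_add_sum_compl S]
    rw [Finset.sum_congr rfl (fun i hi => by rw [hxS i hi]),
        Finset.sum_congr (rfl : Sᶜ = Sᶜ) (fun i hi => by rw [hxSc i hi])]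
    rw [Finset.sum_const, Finset.sum_const]
    simp [hcardSc, hadef]
    ring
  have hmem : ((x ⬝ᵥ (lap w *ᵥ x)) / (x ⬝ᵥ x)) ∈ {r : ℝ | ∃ x : Fin n → ℝ,
      x ≠ 0 ∧ (∑ i, x i) = 0 ∧ r = (x ⬝ᵥ (lap w *ᵥ x)) / (x ⬝ᵥ x)} :=
    ⟨x, hx0, hsum, rfl⟩
  have hle := hlam2.2 hmem
  rw [hA, hB] at hle
  have heq : (n:ℝ)^2 * cutWeight w S / ((n:ℝ) * s * a)
      = (n : ℝ) * cutWeight w S / (s * a) := by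
    rw [div_eq_div_iff (by positivity) (by positivity)]
    ring
  rw [heq, hadef] at hle
  exact hle
end

section
/- Lower half of Cheeger's inequality (Theorem 1 of the paper): for any weighted graph on n ≥ 2 vertices with Laplacian L, one has (1/2) · λ₂(L) ≤ φ(G), where φ(G) is the Cheeger constant of the graph. -/
open Finset Matrix

lemma lap_quad {n : ℕ} (w : Fin n → Fin n → ℝ)
    (hsymm : ∀ i j, w i j = w j i) (hdiag : ∀ i, w i i = 0) (x : Fin n → ℝ) :
    x ⬝ᵥ (lap w *ᵥ x) = (∑ i, ∑ j, w i j * (x i - x j)^2) / 2 := by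
  have key : ∀ i, (∑ j, lap w i j * x j)
      = (∑ j, w i j) * x i - ∑ j, w i j * x j := by
    intro i
    have h1 : ∀ j : Fin n, lap w i j * x j
        = (if i = j then ((∑ k, w i k) + w i j) * x j else 0) - w i j * x j := by
      intro j
      by_cases h : i = j
      · subst h; simp [lap, hdiag i]
      · simp [lap, h]
    rw [Finset.sum_congr rfl fun j _ => h1 j, Finset.sum_sub_distrib,
      Finset.sum_ite_eq]
    simp [hdiag i]
  have lhs : x ⬝ᵥ (lap w *ᵥ x)
      = ∑ i, ∑ j, (w i j * x i ^ 2 - w i j * (x i * x j)) := by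
    simp only [dotProduct, mulVec, key]
    refine Finset.sum_congr rfl fun i _ => ?_
    rw [Finset.sum_sub_distrib, mul_sub]
    congr 1
    · rw [Finset.sum_mul, Finset.mul_sum]
      exact Finset.sum_congr rfl fun j _ => by ring
    · rw [Finset.mul_sum]
      exact Finset.sum_congr rfl fun j _ => by ring
  have rhs : ∑ i, ∑ j, w i j * (x i - x j)^2
      = ∑ i, ∑ j, (w i j * x i ^ 2 - w i j * (x i * x j))
      + (∑ i, ∑ j, (w i j * x j ^ 2 - w i j * (x i * x j))) := by
    rw [← Finset.sum_add_distrib]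
    refine Finset.sum_congr rfl fun i _ => ?_
    rw [← Finset.sum_add_distrib]
    exact Finset.sum_congr rfl fun j _ => by ring
  have swap3 : ∑ i, ∑ j, (w i j * x j ^ 2 - w i j * (x i * x j))
      = ∑ i, ∑ j, (w i j * x i ^ 2 - w i j * (x i * x j)) := by
    rw [Finset.sum_comm]
    exact Finset.sum_congr rfl fun i _ => Finset.sum_congr rfl fun j _ => by
      rw [hsymm]; ring
  rw [lhs, rhs, swap3]; ring

/-- Lower half of Cheeger's inequality: `(1/2) · λ₂(L) ≤ φ(G)`. -/
theorem cheeger_lower {n : ℕ} (hn : 2 ≤ n) (w : Fin n → Fin n → ℝ)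
    (hsymm : ∀ i j, w i j = w j i) (hnonneg : ∀ i j, 0 ≤ w i j)
    (hdiag : ∀ i, w i i = 0)
    (lam2 phi : ℝ)
    (hlam2 : IsLeast {r : ℝ | ∃ x : Fin n → ℝ, x ≠ 0 ∧ (∑ i, x i) = 0 ∧
      r = (x ⬝ᵥ (lap w *ᵥ x)) / (x ⬝ᵥ x)} lam2)
    (hphi : IsLeast {r : ℝ | ∃ S : Finset (Fin n), 1 ≤ S.card ∧ S.card ≤ n / 2 ∧
      r = cutWeight w S / (S.card : ℝ)} phi) :
    (1 / 2 : ℝ) * lam2 ≤ phi := by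
  obtain ⟨S, hS1, hS2, hphieq⟩ := hphi.1
  set s : ℝ := (S.card : ℝ) with hs
  have hnR : (0:ℝ) < n := by
    have : (0:ℕ) < n := by omega
    exact_mod_cast this
  have hs1 : (1:ℝ) ≤ s := by rw [hs]; exact_mod_cast hS1
  have hs0 : (0:ℝ) < s := lt_of_lt_of_le one_pos hs1
  have h2s : 2 * s ≤ n := by
    have h := (Nat.le_div_iff_mul_le (by norm_num : 0 < 2)).mp hS2
    have : (S.card * 2 : ℝ) ≤ n := by exact_mod_cast h
    linarith
  set x : Fin n → ℝ := fun i => (if i ∈ S then 1 else 0) - s / n with hx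
  have hsum : ∑ i, x i = 0 := by
    simp only [hx, Finset.sum_sub_distrib, Finset.sum_ite_mem, Finset.univ_inter,
      Finset.sum_const, Finset.card_univ, Fintype.card_fin, nsmul_eq_mul,
      Finset.sum_const, smul_eq_mul, mul_one]
    field_simp
    exact sub_self _
  have hxne : x ≠ 0 := by
    obtain ⟨i, hi⟩ := Finset.card_pos.mp (by omega : 0 < S.card)
    intro h
    have hxi : x i = 0 := congrFun h i
    simp only [hx, hi, if_true] at hxi
    have hsn : s = n := by
      field_simp at hxi
      linarith
    linarith
  have hdiff : ∀ i j, x i - x j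
      = (if i ∈ S then (1:ℝ) else 0) - (if j ∈ S then 1 else 0) := by
    intro i j; simp only [hx]; ring
  have hsplit : ∀ (f : Fin n → ℝ), ∑ i, f i = ∑ i ∈ S, f i + ∑ i ∈ Sᶜ, f i :=
    fun f => (Finset.sum_add_sum_compl S f).symm
  have hnum : ∑ i, ∑ j, w i j * (x i - x j)^2 = 2 * cutWeight w S := by
    rw [hsplit]
    have hA : ∑ i ∈ S, ∑ j, w i j * (x i - x j)^2 = cutWeight w S := by
      refine Finset.sum_congr rfl fun i hi => ?_
      rw [hsplit]
      have h1 : ∑ j ∈ S, w i j * (x i - x j)^2 = 0 :=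
        Finset.sum_eq_zero fun j hj => by simp [hdiff, hi, hj]
      have h2 : ∑ j ∈ Sᶜ, w i j * (x i - x j)^2 = ∑ j ∈ Sᶜ, w i j :=
        Finset.sum_congr rfl fun j hj => by
          have hj' : j ∉ S := Finset.mem_compl.mp hj
          simp [hdiff, hi, hj']
      rw [h1, h2, zero_add]
    have hB : ∑ i ∈ Sᶜ, ∑ j, w i j * (x i - x j)^2 = cutWeight w S := by
      have : ∑ i ∈ Sᶜ, ∑ j, w i j * (x i - x j)^2 = ∑ i ∈ Sᶜ, ∑ j ∈ S, w i j := by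
        refine Finset.sum_congr rfl fun i hi => ?_
        have hi' : i ∉ S := Finset.mem_compl.mp hi
        rw [hsplit]
        have h1 : ∑ j ∈ S, w i j * (x i - x j)^2 = ∑ j ∈ S, w i j :=
          Finset.sum_congr rfl fun j hj => by simp [hdiff, hi', hj]
        have h2 : ∑ j ∈ Sᶜ, w i j * (x i - x j)^2 = 0 :=
          Finset.sum_eq_zero fun j hj => by
            have hj' : j ∉ S := Finset.mem_compl.mp hj
            simp [hdiff, hi', hj']
        rw [h1, h2, add_zero]
      rw [this, Finset.sum_comm, cutWeight]
      exact Finset.sum_congr rfl fun i _ => Finset.sum_congr rfl fun j _ => hsymm _ _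
    rw [hA, hB]; ring
  have hden : x ⬝ᵥ x = s * (n - s) / n := by
    simp only [dotProduct]
    rw [hsplit]
    have h1 : ∑ i ∈ S, x i * x i = s * (1 - s/n)^2 := by
      rw [Finset.sum_congr rfl (fun i hi => by simp only [hx, hi, if_true] : ∀ i ∈ S, x i * x i = (1 - s/n) * (1 - s/n))]
      rw [Finset.sum_const, nsmul_eq_mul]
      ring
    have hcard : ((Sᶜ.card : ℕ) : ℝ) = n - s := by
      rw [Finset.card_compl, Fintype.card_fin]
      have hle : S.card ≤ n := by omega
      push_cast [Nat.cast_sub hle]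
      ring
    have h2 : ∑ i ∈ Sᶜ, x i * x i = (n - s) * (s/n)^2 := by
      rw [Finset.sum_congr rfl (fun i hi => by
        have hi' : i ∉ S := Finset.mem_compl.mp hi
        simp only [hx, hi', if_false]
        ring_nf : ∀ i ∈ Sᶜ, x i * x i = (s/n) * (s/n))]
      rw [Finset.sum_const, nsmul_eq_mul, hcard]
      ring
    rw [h1, h2]
    field_simp
    ring
  have hdenge : s / 2 ≤ x ⬝ᵥ x := by
    rw [hden, div_le_div_iff₀ (by norm_num) hnR]
    nlinarith
  have hcut0 : 0 ≤ cutWeight w S :=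
    Finset.sum_nonneg fun i _ => Finset.sum_nonneg fun j _ => hnonneg i j
  have hquad : x ⬝ᵥ (lap w *ᵥ x) = cutWeight w S := by
    rw [lap_quad w hsymm hdiag, hnum]; ring
  have hmem : lam2 ≤ cutWeight w S / (x ⬝ᵥ x) :=
    hlam2.2 ⟨x, hxne, hsum, by rw [hquad]⟩
  have hstep : cutWeight w S / (x ⬝ᵥ x) ≤ cutWeight w S / (s / 2) :=
    div_le_div_of_nonneg_left hcut0 (by positivity) hdenge
  have hfin : cutWeight w S / (s / 2) = 2 * phi := by
    rw [hphieq]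
    field_simp
  linarith [hmem.trans hstep, hfin ▸ (hmem.trans hstep)]
end

section
/- Remark 1: for all real z_i, z_j ∈ [0,1] and every real Ẑ satisfying max(0, z_i + z_j − 1) ≤ Ẑ ≤ min(z_i, z_j), one has z_i + z_j − 2Ẑ ≥ (z_i − z_j)². Moreover, the containment of epigraph regions is proper: there exist z_i, z_j ∈ [0,1] and t ∈ ℝ with t ≥ (z_i − z_j)² such that t < z_i + z_j − 2Ẑ for every Ẑ satisfying max(0, z_i + z_j − 1) ≤ Ẑ ≤ min(z_i, z_j). -/
/-- Remark 1: over the unit square, the region induced by the linearized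
constraint (8b) is a proper subset of the epigraph of `(z_i − z_j)²`. -/
theorem linearized_region_proper_subset_epigraph :
    (∀ zi zj : ℝ, zi ∈ Set.Icc (0 : ℝ) 1 → zj ∈ Set.Icc (0 : ℝ) 1 →
      ∀ Zhat : ℝ, max 0 (zi + zj - 1) ≤ Zhat → Zhat ≤ min zi zj →
        (zi - zj) ^ 2 ≤ zi + zj - 2 * Zhat) ∧
    (∃ zi zj : ℝ, zi ∈ Set.Icc (0 : ℝ) 1 ∧ zj ∈ Set.Icc (0 : ℝ) 1 ∧
      ∃ t : ℝ, (zi - zj) ^ 2 ≤ t ∧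
        ∀ Zhat : ℝ, max 0 (zi + zj - 1) ≤ Zhat → Zhat ≤ min zi zj →
          t < zi + zj - 2 * Zhat) := by
  constructor
  · rintro zi zj ⟨hi0, hi1⟩ ⟨hj0, hj1⟩ Zhat h1 h2
    have hz0 : (0:ℝ) ≤ Zhat := le_trans (le_max_left _ _) h1
    have hzi : Zhat ≤ zi := le_trans h2 (min_le_left _ _)
    have hzj : Zhat ≤ zj := le_trans h2 (min_le_right _ _)
    nlinarith [mul_nonneg (sub_nonneg.2 hzi) (sub_nonneg.2 (le_trans hzj hj1)),
      mul_nonneg (sub_nonneg.2 hzj) (sub_nonneg.2 (le_trans hzi hi1)),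
      mul_nonneg hz0 hz0]
  · refine ⟨1/2, 0, ⟨by norm_num, by norm_num⟩, ⟨le_refl _, by norm_num⟩, 1/4, by norm_num, ?_⟩
    intro Zhat h1 h2
    have : Zhat ≤ 0 := le_trans h2 (by norm_num)
    linarith
end

section
/- The Cheeger cut separates sub-optimal solutions while remaining valid for the optimum: let ŵ, w*, and w̃ be weighted graphs on the same n ≥ 2 vertices with Laplacians L̂, L*, L̃, let c_f > 0 satisfy c_f · λ₂(L*) ≤ φ(G*), and suppose λ₂(L̂) ≤ λ₂(L*). If the Cheeger constant of w̃ satisfies φ(G̃) < c_f · λ₂(L̂), and S̃ with 1 ≤ |S̃| ≤ ⌊n/2⌋ is a set attaining φ(G̃), then Σ_{i∈S̃, j∉S̃} w̃ i j < c_f · λ₂(L̂) · |S̃|, while Σ_{i∈S̃, j∉S̃} w* i j ≥ c_f · λ₂(L̂) · |S̃|; that is, the linear inequality Σ_{{i,j}∈δ(S̃)} w i j ≥ c_f · λ₂(L̂) · |S̃| is violated by w̃ but satisfied by w*. -/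
open Finset Matrix

/-- The Cheeger cut separates sub-optimal solutions while remaining valid for
the optimum: the linear inequality `∑_{{i,j}∈δ(S̃)} w i j ≥ c_f · λ₂(L̂) · |S̃|`
is violated by `w̃` but satisfied by `w*`. -/
theorem cheeger_cut_separates {n : ℕ} (hn : 2 ≤ n)
    (what wstar wtilde : Fin n → Fin n → ℝ)
    (hsymm₁ : ∀ i j, what i j = what j i) (hnonneg₁ : ∀ i j, 0 ≤ what i j)
    (hdiag₁ : ∀ i, what i i = 0)
    (hsymm₂ : ∀ i j, wstar i j = wstar j i) (hnonneg₂ : ∀ i j, 0 ≤ wstar i j)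
    (hdiag₂ : ∀ i, wstar i i = 0)
    (hsymm₃ : ∀ i j, wtilde i j = wtilde j i) (hnonneg₃ : ∀ i j, 0 ≤ wtilde i j)
    (hdiag₃ : ∀ i, wtilde i i = 0)
    (lamhat lamstar phistar phitilde : ℝ)
    (hlamhat : IsLeast {r : ℝ | ∃ x : Fin n → ℝ, x ≠ 0 ∧ (∑ i, x i) = 0 ∧
      r = (x ⬝ᵥ (lap what *ᵥ x)) / (x ⬝ᵥ x)} lamhat)
    (hlamstar : IsLeast {r : ℝ | ∃ x : Fin n → ℝ, x ≠ 0 ∧ (∑ i, x i) = 0 ∧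
      r = (x ⬝ᵥ (lap wstar *ᵥ x)) / (x ⬝ᵥ x)} lamstar)
    (hphistar : IsLeast {r : ℝ | ∃ S : Finset (Fin n), 1 ≤ S.card ∧ S.card ≤ n / 2 ∧
      r = cutWeight wstar S / (S.card : ℝ)} phistar)
    (hphitilde : IsLeast {r : ℝ | ∃ S : Finset (Fin n), 1 ≤ S.card ∧ S.card ≤ n / 2 ∧
      r = cutWeight wtilde S / (S.card : ℝ)} phitilde)
    (cf : ℝ) (hcf : 0 < cf) (hcheeger : cf * lamstar ≤ phistar)
    (hle : lamhat ≤ lamstar)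
    (hviol : phitilde < cf * lamhat)
    (Stilde : Finset (Fin n)) (hS1 : 1 ≤ Stilde.card) (hS2 : Stilde.card ≤ n / 2)
    (hattain : phitilde = cutWeight wtilde Stilde / (Stilde.card : ℝ)) :
    cutWeight wtilde Stilde < cf * lamhat * (Stilde.card : ℝ) ∧
      cutWeight wstar Stilde ≥ cf * lamhat * (Stilde.card : ℝ) := by
  have hc : (0 : ℝ) < (Stilde.card : ℝ) := by exact_mod_cast hS1
  constructor
  · have := (div_lt_iff₀ hc).mp (hattain ▸ hviol)
    linarith
  · have hlb : phistar ≤ cutWeight wstar Stilde / (Stilde.card : ℝ) :=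
      hphistar.2 ⟨Stilde, hS1, hS2, rfl⟩
    have h2 : cf * lamhat ≤ cutWeight wstar Stilde / (Stilde.card : ℝ) := by
      nlinarith
    linarith [(le_div_iff₀ hc).mp h2]
end

section
/- Validity of the MISDP reformulation: let w be a weighted graph on n ≥ 2 vertices with Laplacian L, and let γ ∈ ℝ. Then the matrix W = L − γ · (Iₙ − (1/n)·𝟏𝟏ᵀ) is positive semidefinite if and only if γ ≤ λ₂(L). (Here Iₙ − (1/n)·𝟏𝟏ᵀ = Iₙ − e₀⊗e₀ with e₀ = 𝟏/√n is the orthogonal projection onto the hyperplane orthogonal to the all-ones vector 𝟏.) -/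
open Finset Matrix

/-- Validity of the MISDP reformulation: `W = L − γ·(Iₙ − (1/n)·𝟏𝟏ᵀ)` is
positive semidefinite if and only if `γ ≤ λ₂(L)`. -/
theorem misdp_psd_iff_le_lam2 {n : ℕ} (hn : 2 ≤ n) (w : Fin n → Fin n → ℝ)
    (hsymm : ∀ i j, w i j = w j i) (hnonneg : ∀ i j, 0 ≤ w i j)
    (hdiag : ∀ i, w i i = 0)
    (lam2 : ℝ)
    (hlam2 : IsLeast {r : ℝ | ∃ x : Fin n → ℝ, x ≠ 0 ∧ (∑ i, x i) = 0 ∧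
      r = (x ⬝ᵥ (lap w *ᵥ x)) / (x ⬝ᵥ x)} lam2)
    (γ : ℝ) :
    (lap w - γ • ((1 : Matrix (Fin n) (Fin n) ℝ) -
      (n : ℝ)⁻¹ • Matrix.of (fun _ _ => (1 : ℝ)))).PosSemidef ↔ γ ≤ lam2 := by
  have hn0 : (n : ℝ) ≠ 0 := by positivity
  set L := lap w with hL
  set P : Matrix (Fin n) (Fin n) ℝ :=
    (1 : Matrix (Fin n) (Fin n) ℝ) - (n : ℝ)⁻¹ • Matrix.of (fun _ _ => (1 : ℝ)) with hP
  have hLsym : Lᵀ = L := by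
    ext i j
    simp only [Matrix.transpose_apply, hL, lap, Matrix.of_apply]
    by_cases h : i = j
    · subst h; simp
    · simp [h, Ne.symm h, hsymm j i]
  have hLone : L *ᵥ (fun _ => (1 : ℝ)) = 0 := by
    funext i
    have hf : ∀ j, L i j = (if i = j then ∑ k, w i k else 0) - w i j := by
      intro j
      by_cases h : i = j
      · subst h; simp [hL, lap, hdiag]
      · simp [hL, lap, h]
    simp only [Matrix.mulVec, dotProduct, mul_one, Pi.zero_apply]
    rw [Finset.sum_congr rfl (fun j _ => hf j), Finset.sum_sub_distrib,
      Finset.sum_ite_eq (Finset.univ) i (fun _ => ∑ k, w i k)]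
    simp
  -- symmetry of quadratic form
  have hsw : ∀ u v : Fin n → ℝ, u ⬝ᵥ (L *ᵥ v) = (L *ᵥ u) ⬝ᵥ v := by
    intro u v
    rw [Matrix.dotProduct_mulVec]
    congr 1
    rw [← Matrix.mulVec_transpose, hLsym]
  -- main quadratic identity
  have key : ∀ x : Fin n → ℝ,
      x ⬝ᵥ ((L - γ • P) *ᵥ x) =
        (fun i => x i - (∑ j, x j) / n) ⬝ᵥ (L *ᵥ (fun i => x i - (∑ j, x j) / n))
          - γ * ((fun i => x i - (∑ j, x j) / n) ⬝ᵥ (fun i => x i - (∑ j, x j) / n)) := by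
    intro x
    set c : ℝ := (∑ j, x j) / n with hc
    set y : Fin n → ℝ := fun i => x i - c with hy
    have hxy : x = fun i => y i + c * 1 := by funext i; simp [hy]
    have hsum_y : ∑ i, y i = 0 := by
      simp only [hy, Finset.sum_sub_distrib, Finset.sum_const, Finset.card_univ,
        Fintype.card_fin, nsmul_eq_mul, hc]
      field_simp
      ring
    have hx_eq : x = y + c • (fun _ => (1 : ℝ)) := by
      funext i; simp [hy]
    have hLx : L *ᵥ x = L *ᵥ y := by
      rw [hx_eq, Matrix.mulVec_add, Matrix.mulVec_smul, hLone]
      simp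
    have hPx : P *ᵥ x = y := by
      rw [hP, Matrix.sub_mulVec, Matrix.one_mulVec, Matrix.smul_mulVec]
      funext i
      have : (Matrix.of (fun _ _ => (1 : ℝ)) *ᵥ x) i = ∑ j, x j := by
        simp [Matrix.mulVec, dotProduct]
      simp only [Pi.sub_apply, Pi.smul_apply, this, smul_eq_mul, hy]
      rw [hc]; ring
    have h1y : (fun _ => (1 : ℝ)) ⬝ᵥ y = 0 := by
      simp [dotProduct, hsum_y]
    have hone_Ly : (fun _ => (1 : ℝ)) ⬝ᵥ (L *ᵥ y) = 0 := by
      rw [hsw, hLone]; simp [dotProduct]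
    have hxLy : x ⬝ᵥ (L *ᵥ y) = y ⬝ᵥ (L *ᵥ y) := by
      rw [hx_eq, add_dotProduct, smul_dotProduct, hone_Ly]
      simp
    have hxy' : x ⬝ᵥ y = y ⬝ᵥ y := by
      rw [hx_eq, add_dotProduct, smul_dotProduct, h1y]
      simp
    rw [Matrix.sub_mulVec, Matrix.smul_mulVec, dotProduct_sub,
      dotProduct_smul, hLx, hPx, hxLy, hxy']
    simp [smul_eq_mul]
  constructor
  · intro hpsd
    obtain ⟨x, hx0, hxsum, hxval⟩ := hlam2.1
    have hxx : 0 < x ⬝ᵥ x := by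
      rcases Function.ne_iff.mp hx0 with ⟨i, hi⟩
      have : 0 < ∑ j, x j * x j :=
        Finset.sum_pos' (fun j _ => mul_self_nonneg _)
          ⟨i, Finset.mem_univ i, mul_self_pos.mpr (by simpa using hi)⟩
      simpa [dotProduct] using this
    have h0 := hpsd.dotProduct_mulVec_nonneg x
    have hy : (fun i => x i - (∑ j, x j) / n) = x := by
      funext i; rw [hxsum]; simp
    have hq := key x
    rw [hy] at hq
    have : 0 ≤ x ⬝ᵥ (L *ᵥ x) - γ * (x ⬝ᵥ x) := by
      rw [← hq]
      simpa using h0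
    have hle : γ * (x ⬝ᵥ x) ≤ x ⬝ᵥ (L *ᵥ x) := by linarith
    rw [hxval, le_div_iff₀ hxx]
    exact hle
  · intro hγ
    refine posSemidef_iff_dotProduct_mulVec.mpr ⟨?_, ?_⟩
    · -- Hermitian
      rw [Matrix.IsHermitian]
      have hPsym : Pᵀ = P := by
        rw [hP]
        ext i j
        simp [Matrix.transpose_apply, Matrix.one_apply, eq_comm]
      rw [Matrix.conjTranspose_eq_transpose_of_trivial, Matrix.transpose_sub,
        Matrix.transpose_smul, hLsym, hPsym]
    · intro x
      have hq := key x
      set y : Fin n → ℝ := fun i => x i - (∑ j, x j) / n with hy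
      have hstar : (star x : Fin n → ℝ) = x := by simp
      rw [hstar]
      rw [hq]
      by_cases hy0 : y = 0
      · rw [hy0]; simp
      · have hsum_y : ∑ i, y i = 0 := by
          simp only [hy, Finset.sum_sub_distrib, Finset.sum_const, Finset.card_univ,
            Fintype.card_fin, nsmul_eq_mul]
          field_simp
          ring
        have hyy : 0 < y ⬝ᵥ y := by
          rcases Function.ne_iff.mp hy0 with ⟨i, hi⟩
          have : 0 < ∑ j, y j * y j :=
            Finset.sum_pos' (fun j _ => mul_self_nonneg _)
              ⟨i, Finset.mem_univ i, mul_self_pos.mpr (by simpa using hi)⟩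
          simpa [dotProduct] using this
        have hmem : (y ⬝ᵥ (L *ᵥ y)) / (y ⬝ᵥ y) ∈ {r : ℝ | ∃ x : Fin n → ℝ, x ≠ 0 ∧
            (∑ i, x i) = 0 ∧ r = (x ⬝ᵥ (lap w *ᵥ x)) / (x ⬝ᵥ x)} :=
          ⟨y, hy0, hsum_y, rfl⟩
        have hlb := hlam2.2 hmem
        have : γ ≤ (y ⬝ᵥ (L *ᵥ y)) / (y ⬝ᵥ y) := le_trans hγ hlb
        rw [le_div_iff₀ hyy] at this
        linarith
end
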